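/- (Configuration E, second pair.) Let ŵ ∈ S_N, regarded as a bijection {1,…,N} → {1,…,n₁}×{1,…,n₂}. Suppose there are k ∈ {1,…,N−2}, i ∈ {1,…,n₁−2}, j ∈ {1,…,n₂} such that ŵ(k) = (i,j), ŵ(k+1) = (i+1,j), ŵ(k+2) = (i+2,j). Let v ∈ W be determined by v⁻¹ = ((i i+2 i+1), 1) and let v̂ ∈ S_N be determined by v̂⁻¹ = ŵ·(k k+2 k+1)·ŵ₀, where (a b c) denotes the 3-cycle a ↦ b ↦ c ↦ a. Then ŵ·Φ̂(((v̂ŵ)^∨)⁻¹) = {ε̂_{(i+2,j)} − ε̂_{(i+1,j)}, ε̂_{(i+2,j)} − ε̂_{(i,j)}}, Φ(v⁻¹) = {ε_{i+2} − ε_{i+1}, ε_{i+2} − ε_i}, and ρ restricts to a bijection from ŵ·Φ̂(((v̂ŵ)^∨)⁻¹) onto Φ(v⁻¹). -/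
import Mathlib


open Equiv

/-- The weight lattice `L = ℤ^{n₁} × ℤ^{n₂}` of `GL(n₁) × GL(n₂)`. -/
abbrev L (n₁ n₂ : ℕ) : Type := (Fin n₁ → ℤ) × (Fin n₂ → ℤ)

/-- The weight lattice `L̂ = ℤ^N` of `GL(N)`. -/
abbrev Lhat (N : ℕ) : Type := Fin N → ℤ

/-- The standard basis vector `ε_a` of the first factor of `L`. -/
def eps {n₁ n₂ : ℕ} (a : Fin n₁) : L n₁ n₂ := (Pi.single a 1, 0)

/-- The standard basis vector `η_c` of the second factor of `L`. -/
def eta {n₁ n₂ : ℕ} (c : Fin n₂) : L n₁ n₂ := (0, Pi.single c 1)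

/-- The standard basis vector `ε̂_p` of `L̂`. -/
def epsHat {N : ℕ} (p : Fin N) : Lhat N := Pi.single p 1

/-- The lexicographic identification of `{1,…,n₁} × {1,…,n₂}` with `{1,…,n₁n₂}`,
`(i,j) ↦ (i-1)n₂ + j` in 1-based terms. -/
def lex {n₁ n₂ : ℕ} (i : Fin n₁) (j : Fin n₂) : Fin (n₁ * n₂) :=
  finProdFinEquiv (i, j)

/-- The action of `W = S_{n₁} × S_{n₂}` on `L`, characterised by
`u • ε_a = ε_{u₁ a}` and `u • η_c = η_{u₂ c}`. -/
def wAct {n₁ n₂ : ℕ} (u : Perm (Fin n₁) × Perm (Fin n₂)) (x : L n₁ n₂) : L n₁ n₂ :=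
  (x.1 ∘ u.1.symm, x.2 ∘ u.2.symm)

/-- The action of `Ŵ = S_N` on `L̂`, characterised by `û • ε̂_p = ε̂_{û p}`. -/
def hatAct {N : ℕ} (u : Perm (Fin N)) (x : Lhat N) : Lhat N := x ∘ u.symm

/-- The positive roots `Φ⁺` of `GL(n₁) × GL(n₂)`. -/
def PhiPos (n₁ n₂ : ℕ) : Set (L n₁ n₂) :=
  {x | ∃ a b : Fin n₁, a < b ∧ x = eps a - eps b} ∪
    {x | ∃ c d : Fin n₂, c < d ∧ x = eta c - eta d}

/-- The negative roots `Φ⁻ = -Φ⁺`. -/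
def PhiNeg (n₁ n₂ : ℕ) : Set (L n₁ n₂) := Neg.neg '' PhiPos n₁ n₂

/-- The inversion set `Φ(u) = Φ⁻ ∩ u · Φ⁺`. -/
def Phi {n₁ n₂ : ℕ} (u : Perm (Fin n₁) × Perm (Fin n₂)) : Set (L n₁ n₂) :=
  PhiNeg n₁ n₂ ∩ wAct u '' PhiPos n₁ n₂

/-- The positive roots `Φ̂⁺` of `GL(N)`. -/
def PhiHatPos (N : ℕ) : Set (Lhat N) :=
  {x | ∃ p q : Fin N, p < q ∧ x = epsHat p - epsHat q}

/-- The negative roots `Φ̂⁻ = -Φ̂⁺`. -/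
def PhiHatNeg (N : ℕ) : Set (Lhat N) := Neg.neg '' PhiHatPos N

/-- The inversion set `Φ̂(û) = Φ̂⁻ ∩ û · Φ̂⁺`. -/
def PhiHat {N : ℕ} (u : Perm (Fin N)) : Set (Lhat N) :=
  PhiHatNeg N ∩ hatAct u '' PhiHatPos N

/-- The longest element `ŵ₀ : k ↦ N + 1 - k` of `S_N`. -/
def w0 (N : ℕ) : Perm (Fin N) := Fin.revPerm

/-- The 3-cycle `(a b c)` sending `a ↦ b ↦ c ↦ a` (permutations composed right-to-left). -/
def cyc {α : Type*} [DecidableEq α] (a b c : α) : Perm α :=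
  Equiv.swap a b * Equiv.swap b c

/- ### Auxiliary lemmas -/

lemma cyc_apply {α : Type*} [DecidableEq α] {a b c : α} (hab : a ≠ b) (hbc : b ≠ c)
    (hac : a ≠ c) (x : α) :
    cyc a b c x = if x = a then b else if x = b then c else if x = c then a else x := by
  simp only [cyc, Perm.mul_apply, swap_apply_def]
  split_ifs <;> simp_all

lemma hatAct_sub {N : ℕ} (u : Perm (Fin N)) (x y : Lhat N) :
    hatAct u (x - y) = hatAct u x - hatAct u y := rfl

lemma hatAct_epsHat {N : ℕ} (u : Perm (Fin N)) (p : Fin N) :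
    hatAct u (epsHat p) = epsHat (u p) := by
  funext x
  simp [hatAct, epsHat, Pi.single_apply, Equiv.symm_apply_eq]

lemma wAct_sub {n₁ n₂ : ℕ} (u : Perm (Fin n₁) × Perm (Fin n₂)) (x y : L n₁ n₂) :
    wAct u (x - y) = wAct u x - wAct u y := rfl

lemma wAct_eps {n₁ n₂ : ℕ} (σ : Perm (Fin n₁)) (τ : Perm (Fin n₂)) (a : Fin n₁) :
    wAct (σ, τ) (eps a : L n₁ n₂) = eps (σ a) := by
  unfold wAct eps
  refine Prod.ext ?_ rfl
  funext x
  simp [Pi.single_apply, Equiv.symm_apply_eq]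

lemma wAct_eta {n₁ n₂ : ℕ} (σ : Perm (Fin n₁)) (c : Fin n₂) :
    wAct (σ, (1 : Perm (Fin n₂))) (eta c : L n₁ n₂) = eta c := by
  unfold wAct eta
  exact Prod.ext rfl rfl

lemma epsHat_sub_eq {N : ℕ} {a b c d : Fin N} (hab : a ≠ b)
    (h : (epsHat a - epsHat b : Lhat N) = epsHat c - epsHat d) : a = c ∧ b = d := by
  have ha := congrFun h a
  have hb := congrFun h b
  simp only [Pi.sub_apply, epsHat, Pi.single_apply] at ha hb
  split_ifs at ha hb <;> simp_all <;> omega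

lemma eps_sub_eq {n₁ n₂ : ℕ} {a b c d : Fin n₁} (hab : a ≠ b)
    (h : (eps a - eps b : L n₁ n₂) = eps c - eps d) : a = c ∧ b = d :=
  epsHat_sub_eq hab (congrArg Prod.fst h)

lemma eta_sub_eq {n₁ n₂ : ℕ} {a b c d : Fin n₂} (hab : a ≠ b)
    (h : (eta a - eta b : L n₁ n₂) = eta c - eta d) : a = c ∧ b = d :=
  epsHat_sub_eq hab (congrArg Prod.snd h)

lemma eps_sub_ne_eta {n₁ n₂ : ℕ} {a b : Fin n₁} {c d : Fin n₂} (hab : a ≠ b) :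
    (eps a - eps b : L n₁ n₂) ≠ eta c - eta d := by
  intro h
  have := congrFun (congrArg Prod.fst h) a
  simp [eps, eta, Pi.single_apply, hab] at this

lemma cyc_inv {M : ℕ} {k k₁ k₂ p q : Fin M} (h1 : (k₁ : ℕ) = (k : ℕ) + 1)
    (h2 : (k₂ : ℕ) = (k : ℕ) + 2) (hpq : p < q)
    (hgt : cyc k k₂ k₁ q < cyc k k₂ k₁ p) :
    (cyc k k₂ k₁ p = k₂ ∧ cyc k k₂ k₁ q = k) ∨
      (cyc k k₂ k₁ p = k₂ ∧ cyc k k₂ k₁ q = k₁) := by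
  have d1 : k ≠ k₂ := Fin.ne_of_val_ne (by omega)
  have d2 : k₂ ≠ k₁ := Fin.ne_of_val_ne (by omega)
  have d3 : k ≠ k₁ := Fin.ne_of_val_ne (by omega)
  rw [Fin.lt_def] at hpq
  rw [cyc_apply d1 d2 d3] at hgt ⊢
  rw [cyc_apply d1 d2 d3] at hgt ⊢
  split_ifs at hgt ⊢ <;>
    first
      | exact Or.inl ⟨rfl, rfl⟩
      | exact Or.inr ⟨rfl, rfl⟩
      | (simp only [Fin.lt_def, Fin.ext_iff, ne_eq] at *; omega)

lemma lex_inj {n₁ n₂ : ℕ} {i i' : Fin n₁} {j j' : Fin n₂} (h : lex i j = lex i' j') :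
    i = i' ∧ j = j' := by
  have h2 : ((i, j) : Fin n₁ × Fin n₂) = (i', j') := finProdFinEquiv.injective h
  exact ⟨congrArg Prod.fst h2, congrArg Prod.snd h2⟩

/-- Configuration E, second pair: `ŵ(k) = (i,j)`, `ŵ(k+1) = (i+1,j)`,
`ŵ(k+2) = (i+2,j)`; with `v⁻¹ = ((i i+2 i+1), 1)` and `v̂⁻¹ = ŵ (k k+2 k+1) ŵ₀`,
the sets are as indicated and `ρ` restricts to a bijection between them. -/
theorem config_E_second (n₁ n₂ : ℕ) (hn₁ : 0 < n₁) (hn₂ : 0 < n₂)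
    (ρ : Lhat (n₁ * n₂) →ₗ[ℤ] L n₁ n₂)
    (hρ : ∀ (i : Fin n₁) (j : Fin n₂), ρ (epsHat (lex i j)) = eps i + eta j)
    (wh : Perm (Fin (n₁ * n₂)))
    (k k₁ k₂ : Fin (n₁ * n₂)) (hk₁ : (k₁ : ℕ) = (k : ℕ) + 1) (hk₂ : (k₂ : ℕ) = (k : ℕ) + 2)
    (i i' i'' : Fin n₁) (hi' : (i' : ℕ) = (i : ℕ) + 1) (hi'' : (i'' : ℕ) = (i : ℕ) + 2)
    (j : Fin n₂)
    (hwk : wh k = lex i j) (hwk₁ : wh k₁ = lex i' j) (hwk₂ : wh k₂ = lex i'' j)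
    (v : Perm (Fin n₁) × Perm (Fin n₂))
    (hv : v⁻¹ = (cyc i i'' i', 1))
    (vh : Perm (Fin (n₁ * n₂)))
    (hvh : vh⁻¹ = wh * cyc k k₂ k₁ * w0 (n₁ * n₂)) :
    hatAct wh '' PhiHat ((w0 (n₁ * n₂) * (vh * wh))⁻¹) =
      {epsHat (lex i'' j) - epsHat (lex i' j), epsHat (lex i'' j) - epsHat (lex i j)} ∧
    Phi v⁻¹ = {(eps i'' - eps i' : L n₁ n₂), eps i'' - eps i} ∧
    Set.BijOn (⇑ρ) (hatAct wh '' PhiHat ((w0 (n₁ * n₂) * (vh * wh))⁻¹)) (Phi v⁻¹) := by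
  have dk1 : k ≠ k₂ := Fin.ne_of_val_ne (by omega)
  have dk2 : k₂ ≠ k₁ := Fin.ne_of_val_ne (by omega)
  have dk3 : k ≠ k₁ := Fin.ne_of_val_ne (by omega)
  have di1 : i ≠ i'' := Fin.ne_of_val_ne (by omega)
  have di2 : i'' ≠ i' := Fin.ne_of_val_ne (by omega)
  have di3 : i ≠ i' := Fin.ne_of_val_ne (by omega)
  have lkk₁ : k < k₁ := by rw [Fin.lt_def]; omega
  have lkk₂ : k < k₂ := by rw [Fin.lt_def]; omega
  have lk₁k₂ : k₁ < k₂ := by rw [Fin.lt_def]; omega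
  have lii' : i < i' := by rw [Fin.lt_def]; omega
  have lii'' : i < i'' := by rw [Fin.lt_def]; omega
  have li'i'' : i' < i'' := by rw [Fin.lt_def]; omega
  have hck : cyc k k₂ k₁ k = k₂ := by rw [cyc_apply dk1 dk2 dk3]; simp
  have hck₂ : cyc k k₂ k₁ k₂ = k₁ := by rw [cyc_apply dk1 dk2 dk3]; simp [dk1.symm]
  have hck₁ : cyc k k₂ k₁ k₁ = k := by rw [cyc_apply dk1 dk2 dk3]; simp [dk3.symm, dk2.symm]
  have hci : cyc i i'' i' i = i'' := by rw [cyc_apply di1 di2 di3]; simp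
  have hci'' : cyc i i'' i' i'' = i' := by rw [cyc_apply di1 di2 di3]; simp [di1.symm]
  have hci' : cyc i i'' i' i' = i := by rw [cyc_apply di1 di2 di3]; simp [di3.symm, di2.symm]
  have hperm : (w0 (n₁ * n₂) * (vh * wh))⁻¹ = cyc k k₂ k₁ := by
    rw [mul_inv_rev, mul_inv_rev, hvh]; group
  have hA : hatAct wh '' PhiHat ((w0 (n₁ * n₂) * (vh * wh))⁻¹) =
      {epsHat (lex i'' j) - epsHat (lex i' j), epsHat (lex i'' j) - epsHat (lex i j)} := by
    rw [hperm]
    ext x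
    simp only [Set.mem_image, PhiHat, PhiHatNeg, PhiHatPos, Set.mem_inter_iff,
      Set.mem_setOf_eq, Set.mem_insert_iff, Set.mem_singleton_iff]
    constructor
    · rintro ⟨y, ⟨⟨r, ⟨p, q, hpq, rfl⟩, hy1⟩, r', ⟨p', q', hpq', rfl⟩, hy2⟩, rfl⟩
      subst hy2
      rw [hatAct_sub, hatAct_epsHat, hatAct_epsHat] at hy1 ⊢
      rw [neg_sub] at hy1
      have hcne : cyc k k₂ k₁ p' ≠ cyc k k₂ k₁ q' :=
        fun h => hpq'.ne (Equiv.injective _ h)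
      obtain ⟨e1, e2⟩ := epsHat_sub_eq hcne hy1.symm
      have hgt : cyc k k₂ k₁ q' < cyc k k₂ k₁ p' := by rw [e1, e2]; exact hpq
      rcases cyc_inv hk₁ hk₂ hpq' hgt with ⟨f1, f2⟩ | ⟨f1, f2⟩
      · right; rw [f1, f2, hatAct_sub, hatAct_epsHat, hatAct_epsHat, hwk₂, hwk]
      · left; rw [f1, f2, hatAct_sub, hatAct_epsHat, hatAct_epsHat, hwk₂, hwk₁]
    · rintro (rfl | rfl)
      · refine ⟨epsHat k₂ - epsHat k₁,
          ⟨⟨epsHat k₁ - epsHat k₂, ⟨k₁, k₂, lk₁k₂, rfl⟩, neg_sub _ _⟩,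
           ⟨epsHat k - epsHat k₂, ⟨k, k₂, lkk₂, rfl⟩, ?_⟩⟩, ?_⟩
        · rw [hatAct_sub, hatAct_epsHat, hatAct_epsHat, hck, hck₂]
        · rw [hatAct_sub, hatAct_epsHat, hatAct_epsHat, hwk₂, hwk₁]
      · refine ⟨epsHat k₂ - epsHat k,
          ⟨⟨epsHat k - epsHat k₂, ⟨k, k₂, lkk₂, rfl⟩, neg_sub _ _⟩,
           ⟨epsHat k - epsHat k₁, ⟨k, k₁, lkk₁, rfl⟩, ?_⟩⟩, ?_⟩
        · rw [hatAct_sub, hatAct_epsHat, hatAct_epsHat, hck, hck₁]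
        · rw [hatAct_sub, hatAct_epsHat, hatAct_epsHat, hwk₂, hwk]
  have hB : Phi v⁻¹ = {(eps i'' - eps i' : L n₁ n₂), eps i'' - eps i} := by
    rw [hv]
    ext x
    simp only [Phi, PhiNeg, PhiPos, Set.mem_inter_iff, Set.mem_image, Set.mem_union,
      Set.mem_setOf_eq, Set.mem_insert_iff, Set.mem_singleton_iff]
    constructor
    · rintro ⟨⟨r, hr, hy1⟩, r', hr', hy2⟩
      subst hy2
      rcases hr' with ⟨a, b, hab, rfl⟩ | ⟨c, d, hcd, rfl⟩
      · rw [wAct_sub, wAct_eps, wAct_eps] at hy1 ⊢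
        have hne : cyc i i'' i' a ≠ cyc i i'' i' b :=
          fun h => hab.ne (Equiv.injective _ h)
        rcases hr with ⟨a', b', ha'b', rfl⟩ | ⟨c', d', hc'd', rfl⟩
        · rw [neg_sub] at hy1
          obtain ⟨e1, e2⟩ := eps_sub_eq ha'b'.ne' hy1
          have hgt : cyc i i'' i' b < cyc i i'' i' a := by rw [← e1, ← e2]; exact ha'b'
          rcases cyc_inv hi' hi'' hab hgt with ⟨f1, f2⟩ | ⟨f1, f2⟩
          · right; rw [f1, f2]
          · left; rw [f1, f2]
        · rw [neg_sub] at hy1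
          exact absurd hy1.symm (eps_sub_ne_eta hne)
      · rw [wAct_sub, wAct_eta, wAct_eta] at hy1
        rcases hr with ⟨a', b', ha'b', rfl⟩ | ⟨c', d', hc'd', rfl⟩
        · rw [neg_sub] at hy1
          exact absurd hy1 (eps_sub_ne_eta ha'b'.ne')
        · rw [neg_sub] at hy1
          obtain ⟨e1, e2⟩ := eta_sub_eq hc'd'.ne' hy1
          subst e1; subst e2
          exact absurd hcd (lt_asymm hc'd')
    · rintro (rfl | rfl)
      · refine ⟨⟨eps i' - eps i'', Or.inl ⟨i', i'', li'i'', rfl⟩, neg_sub _ _⟩,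
          ⟨eps i - eps i'', Or.inl ⟨i, i'', lii'', rfl⟩, ?_⟩⟩
        rw [wAct_sub, wAct_eps, wAct_eps, hci, hci'']
      · refine ⟨⟨eps i - eps i'', Or.inl ⟨i, i'', lii'', rfl⟩, neg_sub _ _⟩,
          ⟨eps i - eps i', Or.inl ⟨i, i', lii', rfl⟩, ?_⟩⟩
        rw [wAct_sub, wAct_eps, wAct_eps, hci, hci']
  refine ⟨hA, hB, ?_⟩
  rw [hA, hB]
  have hρ1 : ρ (epsHat (lex i'' j) - epsHat (lex i' j)) = eps i'' - eps i' := by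
    rw [map_sub, hρ, hρ]; abel
  have hρ2 : ρ (epsHat (lex i'' j) - epsHat (lex i j)) = eps i'' - eps i := by
    rw [map_sub, hρ, hρ]; abel
  have ht : (eps i'' - eps i' : L n₁ n₂) ≠ eps i'' - eps i := by
    intro h
    exact di3 ((eps_sub_eq di2 h).2.symm)
  refine ⟨?_, ?_, ?_⟩
  · rintro x hx
    rcases hx with rfl | rfl
    · rw [hρ1]; left; rfl
    · rw [hρ2]; right; rfl
  · rintro x hx y hy hxy
    rcases hx with rfl | rfl <;> rcases hy with rfl | rfl
    · rfl
    · rw [hρ1, hρ2] at hxy; exact absurd hxy ht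
    · rw [hρ1, hρ2] at hxy; exact absurd hxy.symm ht
    · rfl
  · rintro t ht'
    rcases ht' with rfl | rfl
    · exact ⟨_, Or.inl rfl, hρ1⟩
    · exact ⟨_, Or.inr rfl, hρ2⟩
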